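/- arXiv:2212.01504 — 5 statements merged into one kernel-verified Lean document; each statement's English description precedes it below -/
import Mathlib

section
/- Let F : ℝⁿ → ℝ be differentiable with ∇F satisfying σ₁‖x−y‖² ≤ ⟨∇F(x)−∇F(y), x−y⟩ ≤ −σ₂‖x−y‖² for all x, y ∈ ℝⁿ and some σ₁, σ₂ ∈ ℝ. Then ∇F is Lipschitz continuous with constant max{|σ₁|, |σ₂|}. -/
open RealInnerProductSpace

section Aux

variable {E : Type*} [NormedAddCommGroup E] [InnerProductSpace ℝ E] [CompleteSpace E]

/-- Derivative of a function along a line, from a gradient. -/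
lemma aux_line_deriv {ψ : E → ℝ} {g : E → E} (hd : ∀ x, HasGradientAt ψ (g x) x)
    (u w : E) (t : ℝ) :
    HasDerivAt (fun s : ℝ => ψ (u + s • w)) ⟪g (u + t • w), w⟫ t := by
  have hc : HasDerivAt (fun s : ℝ => u + s • w) w t := by
    simpa using ((hasDerivAt_id t).smul_const w).const_add u
  have := (hd (u + t • w)).hasFDerivAt.comp_hasDerivAt t hc
  exact this

/-- Convexity-type lower bound from monotonicity of the gradient. -/
lemma aux_lower {ψ : E → ℝ} {g : E → E} (hd : ∀ x, HasGradientAt ψ (g x) x)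
    (h1 : ∀ u v, 0 ≤ ⟪g u - g v, u - v⟫) (u v : E) :
    ψ u + ⟪g u, v - u⟫ ≤ ψ v := by
  set w := v - u with hw
  obtain ⟨c, hc, hceq⟩ := exists_hasDerivAt_eq_slope (fun s : ℝ => ψ (u + s • w))
    (fun s : ℝ => ⟪g (u + s • w), w⟫) one_pos
    (fun s _ => (aux_line_deriv hd u w s).continuousAt.continuousWithinAt)
    (fun s _ => aux_line_deriv hd u w s)
  have hceval : ⟪g (u + c • w), w⟫ = ψ v - ψ u := by
    have h1' : u + w = v := by rw [hw]; abel
    simpa [h1'] using hceq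
  have hmono : ⟪g u, w⟫ ≤ ⟪g (u + c • w), w⟫ := by
    have := h1 (u + c • w) u
    have hsub : u + c • w - u = c • w := by abel
    rw [hsub, real_inner_smul_right] at this
    have hc0 : 0 < c := hc.1
    have : 0 ≤ ⟪g (u + c • w) - g u, w⟫ := by nlinarith [this, hc0]
    rw [inner_sub_left] at this
    linarith
  rw [hceval] at hmono
  linarith

/-- Descent lemma from a one-sided Lipschitz-type bound on the gradient. -/
lemma aux_descent {ψ : E → ℝ} {g : E → E} {K : ℝ} (hd : ∀ x, HasGradientAt ψ (g x) x)
    (h2 : ∀ u v, ⟪g u - g v, u - v⟫ ≤ K * ‖u - v‖ ^ 2) (u v : E) :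
    ψ v ≤ ψ u + ⟪g u, v - u⟫ + K / 2 * ‖v - u‖ ^ 2 := by
  set w := v - u with hw
  set φ := fun t : ℝ => ψ (u + t • w) - t * ⟪g u, w⟫ - K / 2 * ‖w‖ ^ 2 * t ^ 2 with hφ
  have hder : ∀ t : ℝ, HasDerivAt φ
      (⟪g (u + t • w), w⟫ - ⟪g u, w⟫ - K / 2 * ‖w‖ ^ 2 * (2 * t)) t := by
    intro t
    have h1 := aux_line_deriv hd u w t
    have h2' : HasDerivAt (fun t : ℝ => t * ⟪g u, w⟫) ⟪g u, w⟫ t := by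
      simpa using (hasDerivAt_id t).mul_const ⟪g u, w⟫
    have h3 : HasDerivAt (fun t : ℝ => K / 2 * ‖w‖ ^ 2 * t ^ 2)
        (K / 2 * ‖w‖ ^ 2 * (2 * t)) t := by
      have h3' := (hasDerivAt_pow 2 t).const_mul (K / 2 * ‖w‖ ^ 2)
      convert h3' using 1
      · rfl
      · rfl
      ring
    exact (h1.sub h2').sub h3
  obtain ⟨c, hc, hceq⟩ := exists_hasDerivAt_eq_slope φ _ one_pos
    (fun s _ => (hder s).continuousAt.continuousWithinAt) (fun s _ => hder s)
  have hc0 : 0 < c := hc.1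
  -- the derivative at c is nonpositive
  have hdc : ⟪g (u + c • w), w⟫ - ⟪g u, w⟫ - K / 2 * ‖w‖ ^ 2 * (2 * c) ≤ 0 := by
    have := h2 (u + c • w) u
    have hsub : u + c • w - u = c • w := by abel
    rw [hsub, real_inner_smul_right, norm_smul, Real.norm_eq_abs, abs_of_pos hc0] at this
    have hexp : ⟪g (u + c • w) - g u, w⟫ ≤ K * c * ‖w‖ ^ 2 := by
      have := le_of_mul_le_mul_left (by nlinarith [this] : c * ⟪g (u + c • w) - g u, w⟫ ≤ c * (K * c * ‖w‖ ^ 2)) hc0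
      exact this
    rw [inner_sub_left] at hexp
    nlinarith
  have h1' : u + w = v := by rw [hw]; abel
  rw [sub_zero, div_one] at hceq
  have hφ1 : φ 1 = ψ v - ⟪g u, w⟫ - K / 2 * ‖w‖ ^ 2 := by
    simp [hφ, h1']
  have hφ0 : φ 0 = ψ u := by simp [hφ]
  rw [hφ1, hφ0] at hceq
  linarith [hdc, hceq.symm.le, hceq.le]

/-- Cocoercivity of a monotone gradient with one-sided Lipschitz bound. -/
lemma aux_coco {ψ : E → ℝ} {g : E → E} {K : ℝ} (hK : 0 < K)
    (hd : ∀ x, HasGradientAt ψ (g x) x)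
    (h1 : ∀ u v, 0 ≤ ⟪g u - g v, u - v⟫)
    (h2 : ∀ u v, ⟪g u - g v, u - v⟫ ≤ K * ‖u - v‖ ^ 2) (x y : E) :
    ‖g x - g y‖ ^ 2 ≤ K * ⟪g x - g y, x - y⟫ := by
  have key : ∀ a b : E, ψ a ≤ ψ b + ⟪g a, a - b⟫ - 1 / (2 * K) * ‖g b - g a‖ ^ 2 := by
    intro a b
    set ψ2 := fun z : E => ψ z - ⟪g a, z⟫ with hψ2
    set g2 := fun z : E => g z - g a with hg2
    have hd2 : ∀ z, HasGradientAt ψ2 (g2 z) z := by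
      intro z
      rw [hasGradientAt_iff_hasFDerivAt]
      have hlin : HasFDerivAt (fun z : E => ⟪g a, z⟫)
          (InnerProductSpace.toDual ℝ E (g a)) z :=
        (InnerProductSpace.toDual ℝ E (g a)).hasFDerivAt
      have := (hd z).hasFDerivAt.sub hlin
      convert this using 1
      · rfl
      · rfl
      · rfl
      ext w
      simp [hg2, inner_sub_left]
    have h12 : ∀ u v, 0 ≤ ⟪g2 u - g2 v, u - v⟫ := by
      intro u v; simpa [hg2, sub_sub_sub_cancel_right] using h1 u v
    have h22 : ∀ u v, ⟪g2 u - g2 v, u - v⟫ ≤ K * ‖u - v‖ ^ 2 := by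
      intro u v; simpa [hg2, sub_sub_sub_cancel_right] using h2 u v
    set v := b - (1 / K) • (g b - g a) with hv
    have hmin : ψ2 a ≤ ψ2 v := by
      have := aux_lower hd2 h12 a v
      have hz : g2 a = 0 := by simp [hg2]
      simpa [hz] using this
    have hdesc := aux_descent hd2 h22 b v
    have hsub : v - b = -((1 / K) • (g b - g a)) := by rw [hv]; abel
    have hin : ⟪g2 b, v - b⟫ = -(1 / K) * ‖g b - g a‖ ^ 2 := by
      rw [hsub, hg2]
      simp only [inner_neg_right, real_inner_smul_right]
      rw [real_inner_self_eq_norm_sq]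
      ring
    have hnrm : ‖v - b‖ ^ 2 = (1 / K) ^ 2 * ‖g b - g a‖ ^ 2 := by
      rw [hsub, norm_neg, norm_smul]
      simp [abs_of_pos (by positivity : (0:ℝ) < 1 / K), mul_pow]
    have : ψ2 a ≤ ψ2 b - 1 / (2 * K) * ‖g b - g a‖ ^ 2 := by
      have hKne : K ≠ 0 := ne_of_gt hK
      have heq : -(1 / K) * ‖g b - g a‖ ^ 2 + K / 2 * ((1 / K) ^ 2 * ‖g b - g a‖ ^ 2)
          = -(1 / (2 * K)) * ‖g b - g a‖ ^ 2 := by field_simp; ring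
      calc ψ2 a ≤ ψ2 v := hmin
        _ ≤ ψ2 b + ⟪g2 b, v - b⟫ + K / 2 * ‖v - b‖ ^ 2 := hdesc
        _ = ψ2 b - 1 / (2 * K) * ‖g b - g a‖ ^ 2 := by rw [hin, hnrm]; linarith [heq]
    simp only [hψ2] at this
    have hinner : ⟪g a, a⟫ - ⟪g a, b⟫ = ⟪g a, a - b⟫ := by rw [inner_sub_right]
    linarith [this, hinner.symm.le]
  have k1 := key x y
  have k2 := key y x
  have hrev2 : ‖g y - g x‖ ^ 2 = ‖g x - g y‖ ^ 2 := by rw [norm_sub_rev]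
  rw [hrev2] at k1
  have hsum : 1 / (2 * K) * ‖g x - g y‖ ^ 2 + 1 / (2 * K) * ‖g x - g y‖ ^ 2
      ≤ ⟪g x, x - y⟫ + ⟪g y, y - x⟫ := by linarith [k1, k2, hrev2]
  have hcomb : ⟪g x, x - y⟫ + ⟪g y, y - x⟫ = ⟪g x - g y, x - y⟫ := by
    rw [inner_sub_left]
    have : ⟪g y, y - x⟫ = -⟪g y, x - y⟫ := by
      rw [← inner_neg_right]; congr 1; abel
    linarith [this]
  rw [hcomb] at hsum
  have hmul := mul_le_mul_of_nonneg_left hsum (le_of_lt hK)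
  have hKne : K ≠ 0 := ne_of_gt hK
  calc ‖g x - g y‖ ^ 2
      = K * (1 / (2 * K) * ‖g x - g y‖ ^ 2 + 1 / (2 * K) * ‖g x - g y‖ ^ 2) := by
        field_simp; ring
    _ ≤ K * ⟪g x - g y, x - y⟫ := hmul

end Aux

/-- If `F` is differentiable with
`σ₁‖x−y‖² ≤ ⟨∇F(x)−∇F(y), x−y⟩ ≤ −σ₂‖x−y‖²` for all `x, y`, then `∇F` is Lipschitz with
constant `max {|σ₁|, |σ₂|}`. -/
theorem stmt6 {E : Type*} [NormedAddCommGroup E] [InnerProductSpace ℝ E] [CompleteSpace E]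
    (F : E → ℝ) (F' : E → E) (σ₁ σ₂ : ℝ)
    (hdiff : ∀ x, HasGradientAt F (F' x) x)
    (hlow : ∀ x y, σ₁ * ‖x - y‖ ^ 2 ≤ ⟪F' x - F' y, x - y⟫)
    (hup : ∀ x y, ⟪F' x - F' y, x - y⟫ ≤ -σ₂ * ‖x - y‖ ^ 2) :
    ∀ x y, ‖F' x - F' y‖ ≤ max |σ₁| |σ₂| * ‖x - y‖ := by
  intro x y
  set L := max |σ₁| |σ₂| with hLdef
  have hL : 0 ≤ L := le_trans (abs_nonneg σ₁) (le_max_left _ _)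
  have hσ₁ : -L ≤ σ₁ := le_trans (neg_le_neg (le_max_left |σ₁| |σ₂|)) (neg_abs_le σ₁)
  have hσ₂ : -L ≤ σ₂ := le_trans (neg_le_neg (le_max_right |σ₁| |σ₂|)) (neg_abs_le σ₂)
  have key : ∀ ε : ℝ, 0 < ε → ‖F' x - F' y‖ ≤ (L + ε) * ‖x - y‖ := by
    intro ε hε
    set M := L + ε with hM
    have hM0 : 0 < M := by positivity
    set ψ := fun z : E => F z + M / 2 * ‖z‖ ^ 2 with hψ
    set g := fun z : E => F' z + M • z with hg
    have hd : ∀ z, HasGradientAt ψ (g z) z := by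
      intro z
      rw [hasGradientAt_iff_hasFDerivAt]
      have h1 := (hdiff z).hasFDerivAt
      have h2 : HasFDerivAt (fun z : E => ‖z‖ ^ 2) (2 • (innerSL ℝ z)) z :=
        (hasStrictFDerivAt_norm_sq z).hasFDerivAt
      have h3 := h1.add (h2.const_mul (M / 2))
      convert h3 using 1
      · rfl
      · rfl
      · rfl
      ext w
      simp only [hg, ContinuousLinearMap.add_apply, ContinuousLinearMap.coe_smul',
        Pi.smul_apply, innerSL_apply_apply, InnerProductSpace.toDual_apply_apply,
        ContinuousLinearMap.smul_apply, smul_eq_mul]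
      rw [inner_add_left, real_inner_smul_left]
      ring
    have hgdiff : ∀ u v : E, g u - g v = (F' u - F' v) + M • (u - v) := by
      intro u v
      simp only [hg, smul_sub]
      abel
    have h1 : ∀ u v : E, 0 ≤ ⟪g u - g v, u - v⟫ := by
      intro u v
      rw [hgdiff, inner_add_left, real_inner_smul_left, real_inner_self_eq_norm_sq]
      have := hlow u v
      nlinarith [sq_nonneg ‖u - v‖]
    have h2 : ∀ u v : E, ⟪g u - g v, u - v⟫ ≤ 2 * M * ‖u - v‖ ^ 2 := by
      intro u v
      rw [hgdiff, inner_add_left, real_inner_smul_left, real_inner_self_eq_norm_sq]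
      have hupv := hup u v
      have hσ₂' : -σ₂ ≤ L := le_trans (neg_le_abs σ₂) (le_max_right _ _)
      nlinarith [sq_nonneg ‖u - v‖]
    have hcoco := aux_coco (by positivity : (0:ℝ) < 2 * M) hd h1 h2 x y
    rw [hgdiff] at hcoco
    set d := F' x - F' y with hd'
    set e := x - y with he'
    have hexp1 : ‖d + M • e‖ ^ 2 = ‖d‖ ^ 2 + 2 * (M * ⟪d, e⟫) + M ^ 2 * ‖e‖ ^ 2 := by
      rw [norm_add_sq_real, real_inner_smul_right, norm_smul, Real.norm_eq_abs,
        abs_of_pos hM0]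
      ring
    have hexp2 : ⟪d + M • e, e⟫ = ⟪d, e⟫ + M * ‖e‖ ^ 2 := by
      rw [inner_add_left, real_inner_smul_left, real_inner_self_eq_norm_sq]
    rw [hexp1, hexp2] at hcoco
    have hsq : ‖d‖ ^ 2 ≤ (M * ‖e‖) ^ 2 := by nlinarith [hcoco]
    exact (pow_le_pow_iff_left₀ (norm_nonneg d) (by positivity) two_ne_zero).mp hsq
  by_contra hcon
  push_neg at hcon
  set d := ‖F' x - F' y‖ with hd'
  set e := ‖x - y‖ with he'
  have he0 : 0 ≤ e := norm_nonneg _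
  have hδ : 0 < d - L * e := by linarith
  have hεpos : 0 < (d - L * e) / (2 * (e + 1)) := by positivity
  have hk := key _ hεpos
  have : (d - L * e) / (2 * (e + 1)) * e < d - L * e := by
    rw [div_mul_eq_mul_div, div_lt_iff₀ (by positivity)]
    nlinarith [hδ, he0]
  nlinarith [hk, this]
end

section
/- Suppose φ = f + g + indicator of closure(C) is bounded below, −f + s·h is convex for some s ≥ 0, g is proper and lsc, and h is a proper lsc 1-coercive convex function with int(dom h) = C. Then for every 0 < γ < 1/s and every v ∈ ℝⁿ, the function γ·g + h − ⟨v, ·⟩ is 1-coercive and its set of minimizers is nonempty. -/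
open RealInnerProductSpace


lemma lscMinOnCompact {α : Type*} [TopologicalSpace α] {ψ : α → EReal}
    (hψ : LowerSemicontinuous ψ) {K : Set α} (hK : IsCompact K) (hne : K.Nonempty) :
    ∃ x ∈ K, ∀ y ∈ K, ψ x ≤ ψ y := by
  have H := hK.inter_iInter_nonempty (fun y : K => ψ ⁻¹' Set.Iic (ψ y))
    (fun y => hψ.isClosed_preimage _) ?_
  · obtain ⟨x, hxK, hx⟩ := H
    simp only [Set.mem_iInter, Set.mem_preimage, Set.mem_Iic] at hx
    exact ⟨x, hxK, fun y hy => hx ⟨y, hy⟩⟩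
  · intro u
    rcases u.eq_empty_or_nonempty with rfl | hu
    · simpa using hne
    · obtain ⟨y₀, hy₀u, hy₀min⟩ := u.exists_min_image (fun y => ψ y) hu
      refine ⟨y₀, y₀.2, ?_⟩
      simp only [Set.mem_iInter, Set.mem_preimage, Set.mem_Iic]
      intro y hy
      exact hy₀min y hy


lemma existsAffineMinorant {n : ℕ} {D : Set (EuclideanSpace ℝ (Fin n))}
    (hD : Convex ℝ D) {x₀ : EuclideanSpace ℝ (Fin n)} (hx₀ : x₀ ∈ interior D)
    {q : EuclideanSpace ℝ (Fin n) → ℝ} (hq : ConvexOn ℝ D q) :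
    ∃ (u : EuclideanSpace ℝ (Fin n) →L[ℝ] ℝ) (a : ℝ), ∀ x ∈ D, u x + a ≤ q x := by
  have hCopen : IsOpen (interior D) := isOpen_interior
  have hCconv : Convex ℝ (interior D) := hD.interior
  have hCD : interior D ⊆ D := interior_subset
  have hqC : ConvexOn ℝ (interior D) q := hq.subset hCD hCconv
  have hcont : ContinuousOn q (interior D) := hqC.continuousOn hCopen
  set S : Set ((EuclideanSpace ℝ (Fin n)) × ℝ) :=
    {p | p.1 ∈ interior D ∧ q p.1 < p.2} with hSdef
  have hSopen : IsOpen S := by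
    have h1 : ContinuousOn (fun p : (EuclideanSpace ℝ (Fin n)) × ℝ => p.2 - q p.1)
        ((interior D) ×ˢ (Set.univ : Set ℝ)) := by
      apply ContinuousOn.sub continuousOn_snd
      exact hcont.comp continuousOn_fst (fun p hp => hp.1)
    have h2 := h1.isOpen_inter_preimage (hCopen.prod isOpen_univ) isOpen_Ioi (t := Set.Ioi 0)
    convert h2 using 1
    ext p
    simp only [hSdef, Set.mem_setOf_eq, Set.mem_inter_iff, Set.mem_prod, Set.mem_univ, and_true,
      Set.mem_preimage, Set.mem_Ioi, sub_pos]
  have hSconv : Convex ℝ S := by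
    rintro ⟨x₁, t₁⟩ ⟨hx₁, ht₁⟩ ⟨x₂, t₂⟩ ⟨hx₂, ht₂⟩ a b ha hb hab
    refine ⟨hCconv hx₁ hx₂ ha hb hab, ?_⟩
    have hle : q (a • x₁ + b • x₂) ≤ a * q x₁ + b * q x₂ := hqC.2 hx₁ hx₂ ha hb hab
    have hlt : a * q x₁ + b * q x₂ < a * t₁ + b * t₂ := by
      rcases lt_or_ge 0 a with ha' | ha'
      · have h1 : a * q x₁ < a * t₁ := by nlinarith
        have h2 : b * q x₂ ≤ b * t₂ := by nlinarith
        linarith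
      · have ha0 : a = 0 := le_antisymm ha' ha
        have hb1 : b = 1 := by linarith
        simp [ha0, hb1, ht₂]
    exact lt_of_le_of_lt hle hlt
  have hp₀ : ((x₀, q x₀) : (EuclideanSpace ℝ (Fin n)) × ℝ) ∉ S := fun hp => lt_irrefl _ hp.2
  obtain ⟨ℓ, hℓ⟩ := geometric_hahn_banach_point_open hSconv hSopen hp₀
  set c : ℝ := ℓ (0, 1) with hcdef
  have key : ∀ (x : EuclideanSpace ℝ (Fin n)) (t : ℝ), ℓ (x, t) = ℓ (x, 0) + t * c := by
    intro x t
    have hxt : ((x, t) : (EuclideanSpace ℝ (Fin n)) × ℝ)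
        = (x, 0) + t • ((0 : EuclideanSpace ℝ (Fin n)), (1 : ℝ)) := by
      simp [Prod.ext_iff]
    rw [hxt, map_add, map_smul, smul_eq_mul]
  have hcpos : 0 < c := by
    have hmem : ((x₀, q x₀ + 1) : (EuclideanSpace ℝ (Fin n)) × ℝ) ∈ S :=
      ⟨hx₀, by show q x₀ < q x₀ + 1; linarith⟩
    have h1 := hℓ _ hmem
    have e1 := key x₀ (q x₀)
    have e2 := key x₀ (q x₀ + 1)
    nlinarith
  have hbound : ∀ x ∈ interior D, ℓ (x₀, q x₀) ≤ ℓ (x, 0) + q x * c := by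
    intro x hx
    have h2 : ∀ ε : ℝ, 0 < ε → ℓ (x₀, q x₀) < ℓ (x, 0) + (q x + ε) * c := by
      intro ε hε
      have hmem : ((x, q x + ε) : (EuclideanSpace ℝ (Fin n)) × ℝ) ∈ S :=
        ⟨hx, by show q x < q x + ε; linarith⟩
      have h1 := hℓ _ hmem
      have e := key x (q x + ε)
      linarith
    by_contra hcon
    push_neg at hcon
    have hε : 0 < (ℓ (x₀, q x₀) - (ℓ (x, 0) + q x * c)) / c := div_pos (by linarith) hcpos
    have h3 := h2 _ hε
    have h4 : (q x + (ℓ (x₀, q x₀) - (ℓ (x, 0) + q x * c)) / c) * c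
        = q x * c + (ℓ (x₀, q x₀) - (ℓ (x, 0) + q x * c)) := by
      field_simp
    rw [h4] at h3
    linarith
  set u : (EuclideanSpace ℝ (Fin n)) →L[ℝ] ℝ :=
    (-(c⁻¹)) • (ℓ.comp (ContinuousLinearMap.inl ℝ (EuclideanSpace ℝ (Fin n)) ℝ)) with hudef
  set a : ℝ := ℓ (x₀, q x₀) / c with hadef
  have hu_apply : ∀ x : EuclideanSpace ℝ (Fin n), u x = -(c⁻¹) * ℓ (x, 0) := by
    intro x
    simp [hudef, ContinuousLinearMap.comp_apply]
  have hminC : ∀ x ∈ interior D, u x + a ≤ q x := by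
    intro x hx
    have h1 := hbound x hx
    rw [hu_apply, hadef]
    have h4 : (-(c⁻¹) * ℓ (x, 0) + ℓ (x₀, q x₀) / c) * c = ℓ (x₀, q x₀) - ℓ (x, 0) := by
      field_simp
      ring
    have h5 : (-(c⁻¹) * ℓ (x, 0) + ℓ (x₀, q x₀) / c) * c ≤ q x * c := by
      rw [h4]; linarith
    exact le_of_mul_le_mul_right h5 hcpos
  refine ⟨u, a, fun x hx => ?_⟩
  have hseg : ∀ t : ℝ, t ∈ Set.Ioo (0:ℝ) 1 →
      (1 - t) * (u x₀) + t * (u x) + a ≤ (1 - t) * q x₀ + t * q x := by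
    intro t ht
    have hmem : (1 - t) • x₀ + t • x ∈ interior D :=
      hD.combo_interior_self_mem_interior hx₀ hx (sub_pos.2 ht.2) ht.1.le
        (by ring)
    have h1 := hminC _ hmem
    have h2 : q ((1 - t) • x₀ + t • x) ≤ (1 - t) * q x₀ + t * q x :=
      hq.2 (hCD hx₀) hx (by linarith [ht.2]) ht.1.le (by ring)
    have h3 : u ((1 - t) • x₀ + t • x) = (1 - t) * u x₀ + t * u x := by
      rw [map_add, map_smul, map_smul, smul_eq_mul, smul_eq_mul]
    rw [h3] at h1
    linarith
  have hc1 : Continuous (fun t : ℝ => (1 - t) * (u x₀) + t * (u x) + a) :=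
    (((continuous_const.sub continuous_id).mul continuous_const).add
      (continuous_id.mul continuous_const)).add continuous_const
  have hc2 : Continuous (fun t : ℝ => (1 - t) * q x₀ + t * q x) :=
    ((continuous_const.sub continuous_id).mul continuous_const).add
      (continuous_id.mul continuous_const)
  have hlim1 : Filter.Tendsto (fun t : ℝ => (1 - t) * (u x₀) + t * (u x) + a)
      (nhdsWithin 1 (Set.Ioo (0:ℝ) 1)) (nhds (u x + a)) := by
    have h := hc1.tendsto 1
    simp only [sub_self, zero_mul, one_mul, zero_add] at h
    exact h.mono_left nhdsWithin_le_nhds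
  have hlim2 : Filter.Tendsto (fun t : ℝ => (1 - t) * q x₀ + t * q x)
      (nhdsWithin 1 (Set.Ioo (0:ℝ) 1)) (nhds (q x)) := by
    have h := hc2.tendsto 1
    simp only [sub_self, zero_mul, one_mul, zero_add] at h
    exact h.mono_left nhdsWithin_le_nhds
  have hne : (nhdsWithin (1:ℝ) (Set.Ioo (0:ℝ) 1)).NeBot := by
    apply mem_closure_iff_nhdsWithin_neBot.1
    rw [closure_Ioo (by norm_num : (0:ℝ) ≠ 1)]
    exact ⟨by norm_num, le_refl 1⟩
  exact le_of_tendsto_of_tendsto hlim1 hlim2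
    (Filter.eventually_iff_exists_mem.2 ⟨Set.Ioo 0 1, self_mem_nhdsWithin, fun t ht => hseg t ht⟩)

/-- relative prox-boundedness: with `φ = f + g + δ_{cl C}` bounded below,
`−f + s·h` convex (`s ≥ 0`), `g` proper lsc, `h` proper lsc 1-coercive convex with
`interior (dom h) = C`, for every `0 < γ < 1/s` (i.e. `γ·s < 1`) and every `v`, the
function `γ·g + h − ⟨v, ·⟩` is 1-coercive and admits a minimizer. -/
theorem stmt8 {n : ℕ} (C : Set (EuclideanSpace ℝ (Fin n)))
    (f : EuclideanSpace ℝ (Fin n) → ℝ)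
    (g h : EuclideanSpace ℝ (Fin n) → EReal)
    (hCne : C.Nonempty) (hCopen : IsOpen C) (hCconv : Convex ℝ C)
    (hhproper : (∃ x, h x ≠ ⊤) ∧ ∀ x, h x ≠ ⊥)
    (hhlsc : LowerSemicontinuous h)
    (hhconv : ∀ x y : EuclideanSpace ℝ (Fin n), ∀ t : ℝ, 0 ≤ t → t ≤ 1 →
      h (t • x + (1 - t) • y) ≤ (t : EReal) * h x + ((1 - t : ℝ) : EReal) * h y)
    (hhcoercive : ∀ M : ℝ, ∃ R : ℝ, ∀ x, R ≤ ‖x‖ → ((M * ‖x‖ : ℝ) : EReal) ≤ h x)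
    (hdom : interior {x | h x ≠ ⊤} = C)
    (hgproper : (∃ x, g x ≠ ⊤) ∧ ∀ x, g x ≠ ⊥)
    (hglsc : LowerSemicontinuous g)
    (hfdiff : DifferentiableOn ℝ f C)
    (s : ℝ) (hs : 0 ≤ s)
    (hweak : ∀ x y : EuclideanSpace ℝ (Fin n), ∀ t : ℝ, 0 ≤ t → t ≤ 1 →
      ((-f (t • x + (1 - t) • y) : ℝ) : EReal) + (s : EReal) * h (t • x + (1 - t) • y) ≤
        (t : EReal) * (((-f x : ℝ) : EReal) + (s : EReal) * h x) +
          ((1 - t : ℝ) : EReal) * (((-f y : ℝ) : EReal) + (s : EReal) * h y))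
    (hbdd : ∃ m : ℝ, ∀ x ∈ closure C, (m : EReal) ≤ ((f x : ℝ) : EReal) + g x)
    (γ : ℝ) (v : EuclideanSpace ℝ (Fin n)) (hγ : 0 < γ) (hγs : γ * s < 1) :
    (∀ M : ℝ, ∃ R : ℝ, ∀ x, R ≤ ‖x‖ →
      ((M * ‖x‖ : ℝ) : EReal) ≤ (γ : EReal) * g x + h x - ((⟪v, x⟫ : ℝ) : EReal)) ∧
    ∃ xmin, ∀ y,
      (γ : EReal) * g xmin + h xmin - ((⟪v, xmin⟫ : ℝ) : EReal) ≤
        (γ : EReal) * g y + h y - ((⟪v, y⟫ : ℝ) : EReal) := by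
  obtain ⟨m, hm⟩ := hbdd
  obtain ⟨x₀C, hx₀C⟩ := hCne
  set ψ : EuclideanSpace ℝ (Fin n) → EReal :=
    fun x => (γ : EReal) * g x + h x - ((⟪v, x⟫ : ℝ) : EReal) with hψdef
  set D : Set (EuclideanSpace ℝ (Fin n)) := {x | h x ≠ ⊤} with hDdef
  have hmemD : ∀ x : EuclideanSpace ℝ (Fin n), x ∈ D ↔ h x ≠ ⊤ := fun x => Iff.rfl
  have hCD : C ⊆ D := by rw [← hdom]; exact interior_subset
  have hx₀D : x₀C ∈ interior D := by rw [hdom]; exact hx₀C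
  have hhfin : ∀ x ∈ D, h x = (((h x).toReal : ℝ) : EReal) :=
    fun x hx => (EReal.coe_toReal hx (hhproper.2 x)).symm
  have hDconv : Convex ℝ D := by
    intro x hx y hy a b ha hb hab
    have hb' : b = 1 - a := by linarith
    subst hb'
    have hxy := hhconv x y a ha (by linarith)
    rw [hhfin x hx, hhfin y hy] at hxy
    rw [← EReal.coe_mul, ← EReal.coe_mul, ← EReal.coe_add] at hxy
    exact ne_top_of_le_ne_top (EReal.coe_ne_top _) hxy
  -- the convex real function F = s * h.toReal - f  on D
  have hFconv : ConvexOn ℝ D (fun x => s * (h x).toReal - f x) := by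
    refine ⟨hDconv, ?_⟩
    intro x hx y hy a b ha hb hab
    have hb' : b = 1 - a := by linarith
    subst hb'
    have hz : a • x + (1 - a) • y ∈ D := hDconv hx hy ha hb hab
    have hw := hweak x y a ha (by linarith)
    rw [hhfin x hx, hhfin y hy, hhfin _ hz] at hw
    norm_cast at hw
    simp only [smul_eq_mul]
    linear_combination hw
  obtain ⟨u, a, hua⟩ := existsAffineMinorant hDconv hx₀D hFconv
  -- D is contained in the closure of C
  have hDcl : D ⊆ closure C := by
    intro x hx
    have htd : Filter.Tendsto (fun t : ℝ => (1 - t) • x₀C + t • x)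
        (nhdsWithin 1 (Set.Ioo (0:ℝ) 1)) (nhds x) := by
      have hc : Continuous (fun t : ℝ => (1 - t) • x₀C + t • x) :=
        ((continuous_const.sub continuous_id).smul continuous_const).add
          (continuous_id.smul continuous_const)
      have h1 := hc.tendsto 1
      simp only [sub_self, zero_smul, one_smul, zero_add] at h1
      exact h1.mono_left nhdsWithin_le_nhds
    have hne : (nhdsWithin (1:ℝ) (Set.Ioo (0:ℝ) 1)).NeBot := by
      apply mem_closure_iff_nhdsWithin_neBot.1
      rw [closure_Ioo (by norm_num : (0:ℝ) ≠ 1)]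
      exact ⟨by norm_num, le_refl 1⟩
    apply mem_closure_of_tendsto htd
    refine Filter.eventually_iff_exists_mem.2 ⟨Set.Ioo 0 1, self_mem_nhdsWithin, fun t ht => ?_⟩
    have hmem : (1 - t) • x₀C + t • x ∈ interior D :=
      hDconv.combo_interior_self_mem_interior hx₀D hx (sub_pos.2 ht.2) ht.1.le (by ring)
    rw [hdom] at hmem
    exact hmem
  -- lower bound for g on D
  have hgD : ∀ x ∈ D, g x ≠ ⊤ → ((m - f x : ℝ) : EReal) ≤ g x := by
    intro x hx hgx
    have hmx := hm x (hDcl hx)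
    have hgfin : g x = (((g x).toReal : ℝ) : EReal) := (EReal.coe_toReal hgx (hgproper.2 x)).symm
    rw [hgfin] at hmx ⊢
    rw [← EReal.coe_add] at hmx
    rw [EReal.coe_le_coe_iff] at hmx ⊢
    linarith
  have hγg_ne_bot : ∀ x, (γ : EReal) * g x ≠ ⊥ := by
    intro x
    by_cases hgx : g x = ⊤
    · rw [hgx, EReal.mul_top_of_pos (by exact_mod_cast hγ)]
      exact top_ne_bot
    · rw [(EReal.coe_toReal hgx (hgproper.2 x)).symm, ← EReal.coe_mul]
      exact EReal.coe_ne_bot _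
  have hψne_bot : ∀ x, ψ x ≠ ⊥ := by
    intro x heq
    rw [hψdef] at heq
    simp only [sub_eq_add_neg, ← EReal.coe_neg] at heq
    rcases EReal.add_eq_bot_iff.1 heq with h1 | h1
    · rcases EReal.add_eq_bot_iff.1 h1 with h2 | h2
      · exact hγg_ne_bot x h2
      · exact hhproper.2 x h2
    · exact EReal.coe_ne_bot _ h1
  have hψtop : ∀ x, x ∉ D → ψ x = ⊤ := by
    intro x hx
    have hhx : h x = ⊤ := not_not.1 hx
    rw [hψdef]
    show (γ : EReal) * g x + h x - ((⟪v, x⟫ : ℝ) : EReal) = ⊤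
    rw [hhx, EReal.add_top_of_ne_bot (hγg_ne_bot x), EReal.top_sub_coe]
  -- key lower bound on D
  have hkey : ∀ x ∈ D,
      ((γ*m + γ*(u x + a) + (1 - γ*s)*(h x).toReal - ⟪v,x⟫ : ℝ) : EReal) ≤ ψ x := by
    intro x hx
    by_cases hgx : g x = ⊤
    · have : ψ x = ⊤ := by
        rw [hψdef]
        show (γ : EReal) * g x + h x - ((⟪v, x⟫ : ℝ) : EReal) = ⊤
        rw [hgx, EReal.mul_top_of_pos (by exact_mod_cast hγ),
          EReal.top_add_of_ne_bot (hhproper.2 x), EReal.top_sub_coe]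
      rw [this]; exact le_top
    · have hgfin : g x = (((g x).toReal : ℝ) : EReal) := (EReal.coe_toReal hgx (hgproper.2 x)).symm
      have hgb : ((m - f x : ℝ) : EReal) ≤ g x := hgD x hx hgx
      rw [hgfin] at hgb
      rw [EReal.coe_le_coe_iff] at hgb
      have hub := hua x hx
      rw [hψdef]
      show _ ≤ (γ : EReal) * g x + h x - ((⟪v, x⟫ : ℝ) : EReal)
      rw [hgfin, hhfin x hx, ← EReal.coe_mul, ← EReal.coe_add, ← EReal.coe_sub]
      simp only [EReal.toReal_coe]
      rw [EReal.coe_le_coe_iff]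
      have h1 : γ*(m - f x) ≤ γ*(g x).toReal := by nlinarith
      have h2 : γ*(u x + a) ≤ γ*(s*(h x).toReal - f x) := by nlinarith
      linarith
  -- Part 1: 1-coercivity
  have part1 : ∀ M : ℝ, ∃ R : ℝ, ∀ x, R ≤ ‖x‖ → ((M * ‖x‖ : ℝ) : EReal) ≤ ψ x := by
    intro M
    have h1γs : 0 < 1 - γ*s := by linarith
    obtain ⟨R₀, hR₀⟩ := hhcoercive ((M + (γ*‖u‖ + ‖v‖) + |γ*m + γ*a| + 1)/(1 - γ*s))
    refine ⟨max R₀ 1, fun x hx => ?_⟩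
    by_cases hxD : x ∈ D
    · have hr := hR₀ x (le_trans (le_max_left _ _) hx)
      rw [hhfin x hxD, EReal.coe_le_coe_iff] at hr
      rw [div_mul_eq_mul_div, div_le_iff₀ h1γs] at hr
      have hx1 : (1:ℝ) ≤ ‖x‖ := le_trans (le_max_right _ _) hx
      refine le_trans ?_ (hkey x hxD)
      rw [EReal.coe_le_coe_iff]
      have hux : -(‖u‖ * ‖x‖) ≤ u x := by
        have h5 := u.le_opNorm x
        rw [Real.norm_eq_abs] at h5
        linarith [neg_abs_le (u x)]
      have hvx : ⟪v,x⟫ ≤ ‖v‖ * ‖x‖ := real_inner_le_norm v x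
      have habs : -(γ*m + γ*a) ≤ |γ*m + γ*a| := neg_le_abs _
      have hux' : γ * (-(‖u‖ * ‖x‖)) ≤ γ * u x := mul_le_mul_of_nonneg_left hux hγ.le
      nlinarith [hr, hvx, habs, hux', hx1, abs_nonneg (γ*m + γ*a)]
    · rw [hψtop x hxD]; exact le_top
  -- lower semicontinuity of ψ
  have hmono : Monotone (fun t : EReal => (γ : EReal) * t) :=
    fun p q hpq => mul_le_mul_of_nonneg_left hpq (by exact_mod_cast hγ.le)
  have hcontmul : Continuous (fun t : EReal => (γ : EReal) * t) := by
    rw [continuous_iff_continuousAt]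
    intro y
    have hγ0 : ((γ : ℝ) : EReal) ≠ 0 := EReal.coe_ne_zero.2 hγ.ne'
    have hmul := EReal.continuousAt_mul (p := (((γ:ℝ):EReal), y)) (Or.inl hγ0) (Or.inl hγ0)
      (Or.inl (EReal.coe_ne_bot γ)) (Or.inl (EReal.coe_ne_top γ))
    exact hmul.comp ((continuous_const.prodMk continuous_id).continuousAt)
  have l1 : LowerSemicontinuous fun x => (γ : EReal) * g x :=
    hcontmul.comp_lowerSemicontinuous hglsc hmono
  have l12 : LowerSemicontinuous fun x => (γ : EReal) * g x + h x :=
    l1.add' hhlsc (fun x => EReal.continuousAt_add (Or.inr (hhproper.2 x))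
      (Or.inl (hγg_ne_bot x)))
  have l3 : Continuous fun x : EuclideanSpace ℝ (Fin n) => ((-⟪v,x⟫ : ℝ) : EReal) :=
    continuous_coe_real_ereal.comp (continuous_const.inner continuous_id).neg
  have hψlsc : LowerSemicontinuous ψ := by
    have l4 := l12.add' l3.lowerSemicontinuous
      (fun x => EReal.continuousAt_add (Or.inr (EReal.coe_ne_bot _))
        (Or.inr (EReal.coe_ne_top _)))
    have heq : ψ = fun x => ((γ : EReal) * g x + h x) + ((-⟪v,x⟫ : ℝ) : EReal) := by
      funext x
      rw [hψdef]
      show (γ : EReal) * g x + h x - ((⟪v, x⟫ : ℝ) : EReal) = _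
      rw [sub_eq_add_neg, EReal.coe_neg]
    rw [heq]
    exact l4
  refine ⟨part1, ?_⟩
  -- Part 2: existence of a minimizer
  by_cases hall : ∀ x, ψ x = ⊤
  · refine ⟨0, fun y => ?_⟩
    show ψ 0 ≤ ψ y
    rw [hall 0, hall y]
  · push_neg at hall
    obtain ⟨x₀, hx₀⟩ := hall
    have hc : ψ x₀ = (((ψ x₀).toReal : ℝ) : EReal) := (EReal.coe_toReal hx₀ (hψne_bot x₀)).symm
    obtain ⟨R, hR⟩ := part1 1
    set R' := max (max R ‖x₀‖) (|(ψ x₀).toReal| + 1) with hR'def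
    have hx₀K : x₀ ∈ Metric.closedBall (0 : EuclideanSpace ℝ (Fin n)) R' := by
      rw [Metric.mem_closedBall, dist_zero_right]
      exact le_trans (le_max_right R ‖x₀‖) (le_max_left _ _)
    obtain ⟨xm, hxmK, hxmmin⟩ := lscMinOnCompact hψlsc (isCompact_closedBall 0 R') ⟨x₀, hx₀K⟩
    refine ⟨xm, fun y => ?_⟩
    show ψ xm ≤ ψ y
    by_cases hyK : y ∈ Metric.closedBall (0 : EuclideanSpace ℝ (Fin n)) R'
    · exact hxmmin y hyK
    · have hy : R' < ‖y‖ := by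
        rw [Metric.mem_closedBall, dist_zero_right, not_le] at hyK
        exact hyK
      have h1 : R ≤ ‖y‖ :=
        le_of_lt (lt_of_le_of_lt (le_trans (le_max_left R ‖x₀‖) (le_max_left _ _)) hy)
      have h2 := hR y h1
      have h3 : ψ xm ≤ ψ x₀ := hxmmin x₀ hx₀K
      have h4 : (ψ x₀).toReal ≤ 1 * ‖y‖ := by
        have := le_trans (le_max_right (max R ‖x₀‖) (|(ψ x₀).toReal| + 1)) hy.le
        have := le_abs_self (ψ x₀).toReal
        linarith
      calc ψ xm ≤ ψ x₀ := h3
        _ = (((ψ x₀).toReal : ℝ) : EReal) := hc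
        _ ≤ ((1 * ‖y‖ : ℝ) : EReal) := EReal.coe_le_coe_iff.2 h4
        _ ≤ ψ y := h2
end

section
/- Let x̄ minimize w ↦ φ(w) + D_{ĥ−f̂}(w, x) + D_{f̂}(w, x⁻) over ℝⁿ, where ĥ − f̂ and f̂ are differentiable. Then, with E the associated envelope, E(x̄, x) ≤ E(x, x⁻) − D_{ĥ−f̂}(x̄, x) − D_{f̂}(x̄, x⁻) + D_{f̂}(x, x⁻). -/
open RealInnerProductSpace

/-- Generalized Bregman distance of a function `ψ` with (formal) gradient `g`. -/
noncomputable def breg {E : Type*} [NormedAddCommGroup E] [InnerProductSpace ℝ E] [CompleteSpace E]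
    (ψ : E → ℝ) (g : E → E) (a b : E) : ℝ :=
  ψ a - ψ b - ⟪g b, a - b⟫

/-- if `x̄` minimizes `w ↦ φ(w) + D_{ĥ−f̂}(w,x) + D_{f̂}(w,x⁻)`, then the
envelope satisfies
`E(x̄, x) ≤ E(x, x⁻) − D_{ĥ−f̂}(x̄,x) − D_{f̂}(x̄,x⁻) + D_{f̂}(x,x⁻)`. -/
theorem stmt14 {E : Type*} [NormedAddCommGroup E] [InnerProductSpace ℝ E] [CompleteSpace E]
    (C : Set E) (φ hhat fhat : E → ℝ) (Gh Gf : E → E)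
    (hh_diff : ∀ y ∈ C, HasGradientAt hhat (Gh y) y)
    (hf_diff : ∀ y ∈ C, HasGradientAt fhat (Gf y) y)
    (x xm xbar : E) (hx : x ∈ C) (hxm : xm ∈ C) (hxbar : xbar ∈ C)
    (hmin : ∀ w : E,
      φ xbar + breg (fun z => hhat z - fhat z) (fun z => Gh z - Gf z) xbar x +
          breg fhat Gf xbar xm ≤
        φ w + breg (fun z => hhat z - fhat z) (fun z => Gh z - Gf z) w x +
          breg fhat Gf w xm) :
    (⨅ w : E, ((φ w +
        breg (fun z => hhat z - fhat z) (fun z => Gh z - Gf z) w xbar +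
        breg fhat Gf w x - breg fhat Gf xbar x : ℝ) : EReal)) ≤
      (⨅ w : E, ((φ w +
        breg (fun z => hhat z - fhat z) (fun z => Gh z - Gf z) w x +
        breg fhat Gf w xm - breg fhat Gf x xm : ℝ) : EReal)) +
      ((-(breg (fun z => hhat z - fhat z) (fun z => Gh z - Gf z) xbar x) -
        breg fhat Gf xbar xm + breg fhat Gf x xm : ℝ) : EReal) := by
  have hbreg0 : ∀ (ψ : E → ℝ) (g : E → E) (a : E), breg ψ g a a = 0 := by
    intro ψ g a; simp [breg]
  set A := breg (fun z => hhat z - fhat z) (fun z => Gh z - Gf z) xbar x with hA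
  set B := breg fhat Gf xbar xm with hB
  set c := breg fhat Gf x xm with hc
  have h1 : (⨅ w : E, ((φ w +
      breg (fun z => hhat z - fhat z) (fun z => Gh z - Gf z) w xbar +
      breg fhat Gf w x - breg fhat Gf xbar x : ℝ) : EReal)) ≤ ((φ xbar : ℝ) : EReal) := by
    refine le_trans (iInf_le _ xbar) ?_
    rw [hbreg0]
    norm_num
  have h2 : ((φ xbar + A + B - c : ℝ) : EReal) ≤ (⨅ w : E, ((φ w +
      breg (fun z => hhat z - fhat z) (fun z => Gh z - Gf z) w x +
      breg fhat Gf w xm - breg fhat Gf x xm : ℝ) : EReal)) := by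
    refine le_iInf fun w => ?_
    exact_mod_cast by linarith [hmin w]
  refine le_trans h1 ?_
  calc ((φ xbar : ℝ) : EReal) = ((φ xbar + A + B - c : ℝ) : EReal) + ((-A - B + c : ℝ) : EReal) := by
        rw [← EReal.coe_add]; norm_num
    _ ≤ _ := add_le_add h2 le_rfl
end

section
/- Consider n = 1, g = indicator of {−1, 1}, f(x) = (L/2)x², h(x) = (1/2)x², stepsize γ < 1/L, α = γL, and inertia β ∈ ℝ. The iFRB operator is T(x, x⁻) = sign((1 − 2α + β)x + (α − β)x⁻). If α ≥ (1 + 2β)/3, then the alternating sequence x^k = (−1)^k satisfies x^{k+1} ∈ T(x^k, x^{k−1}) for all k, i.e. (−1)^{k+1} = sign((1 − 2α + β)(−1)^k + (α − β)(−1)^{k−1}) (with sign 0 := {±1}). -/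
/-- The sign, as a set, with `sign 0 := {±1}`. -/
noncomputable def sgnSet (u : ℝ) : Set ℝ :=
  if 0 < u then {1} else if u < 0 then {-1} else {1, -1}

/-- for `n = 1`, `g = δ_{{±1}}`, `f = (L/2)x²`, `h = (1/2)x²`, `γ < 1/L`,
`α = γL`: the iFRB operator is `T(x, x⁻) = sign((1 − 2α + β)x + (α − β)x⁻)`, and if
`α ≥ (1 + 2β)/3` the alternating sequence `x^k = (−1)^k` satisfies
`x^{k+1} ∈ T(x^k, x^{k−1})` for all `k`. -/
theorem stmt16 (L γ β : ℝ) (hL : 0 < L) (hγpos : 0 < γ) (hγ : γ < 1 / L)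
    (hα : γ * L ≥ (1 + 2 * β) / 3) :
    ∀ k : ℕ, ((-1 : ℝ) ^ (k + 2)) ∈
      sgnSet ((1 - 2 * (γ * L) + β) * (-1 : ℝ) ^ (k + 1) +
        (γ * L - β) * (-1 : ℝ) ^ k) := by
  intro k
  set c : ℝ := 3 * (γ * L) - 1 - 2 * β with hc
  have hc0 : 0 ≤ c := by
    have : (1 + 2 * β) / 3 ≤ γ * L := hα
    linarith
  have harg : (1 - 2 * (γ * L) + β) * (-1 : ℝ) ^ (k + 1) +
      (γ * L - β) * (-1 : ℝ) ^ k = (-1 : ℝ) ^ k * c := by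
    rw [pow_succ]; ring
  have hpow : (-1 : ℝ) ^ (k + 2) = (-1 : ℝ) ^ k := by
    rw [pow_succ, pow_succ]; ring
  rw [harg, hpow]
  rcases hc0.lt_or_eq with hpos | hzero
  · rcases Nat.even_or_odd k with he | ho
    · rw [he.neg_one_pow]
      simp only [sgnSet, one_mul]
      rw [if_pos hpos]
      exact Set.mem_singleton _
    · rw [ho.neg_one_pow]
      simp only [sgnSet]
      have h1 : ¬ (0 : ℝ) < -1 * c := by nlinarith
      have h2 : (-1 : ℝ) * c < 0 := by nlinarith
      rw [if_neg h1, if_pos h2]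
      simp
  · simp only [sgnSet, ← hzero, mul_zero, lt_irrefl, if_false]
    rcases Nat.even_or_odd k with he | ho
    · rw [he.neg_one_pow]; exact Set.mem_insert _ _
    · rw [ho.neg_one_pow]; exact Set.mem_insert_iff.mpr (Or.inr rfl)
end

section
/- Let (e_k) be nonnegative, nonincreasing, converging to 0, and satisfy e_{k−1} − e_k ≥ K·e_k^{2θ} for all large k, where K > 0 and θ ∈ (1/2, 1). Then there exists c > 0 such that e_k ≤ c·k^{−1/(2θ−1)} for all large k. -/
open Real

/-- Tangent-line inequality for `x ↦ x^(-β)`, `β ∈ (0,1)`: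
for `0 < b ≤ a`, `β * a^(-(β+1)) * (a - b) ≤ b^(-β) - a^(-β)`. -/
lemma stmt18_tangent {a b β : ℝ} (hb : 0 < b) (hba : b ≤ a) (hβ0 : 0 < β) (hβ1 : β < 1) :
    β * a ^ (-(β + 1)) * (a - b) ≤ b ^ (-β) - a ^ (-β) := by
  have ha : 0 < a := hb.trans_le hba
  set t : ℝ := b / a with ht_def
  have ht : 0 < t := div_pos hb ha
  have ht1 : t ≤ 1 := (div_le_one ha).mpr hba
  -- Bernoulli: t^β ≤ 1 + β*(t-1)
  have hbern : t ^ β ≤ 1 + β * (t - 1) := by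
    have := rpow_one_add_le_one_add_mul_self (s := t - 1) (by linarith) hβ0.le hβ1.le
    simpa using this
  have hu : 0 < 1 + β * (t - 1) := by nlinarith
  have htβ : 0 < t ^ β := Real.rpow_pos_of_pos ht β
  -- key: t^(-β) ≥ 1 + β*(1-t)
  have hkey : 1 + β * (1 - t) ≤ t ^ (-β) := by
    rw [Real.rpow_neg ht.le]
    have hmul : (1 + β * (1 - t)) * t ^ β ≤ 1 := by
      have hprod : (1 + β * (1 - t)) * (1 + β * (t - 1)) ≤ 1 := by
        nlinarith [sq_nonneg (β * (1 - t))]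
      nlinarith [hbern, htβ]
    have hinv : t ^ β * (t ^ β)⁻¹ = 1 := mul_inv_cancel₀ htβ.ne'
    nlinarith [hmul, hinv, htβ, inv_pos.mpr htβ]
  -- translate back to a, b
  have htab : b ^ (-β) = t ^ (-β) * a ^ (-β) := by
    have haβ0 : a ^ (-β) ≠ 0 := (Real.rpow_pos_of_pos ha _).ne'
    rw [ht_def, Real.div_rpow hb.le ha.le]
    field_simp
  have haβ : 0 < a ^ (-β) := Real.rpow_pos_of_pos ha _
  have hsplit : a ^ (-(β + 1)) = a ^ (-β) * a⁻¹ := by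
    rw [show -(β + 1) = -β + -1 by ring, Real.rpow_add ha, Real.rpow_neg_one]
  rw [htab, hsplit]
  have h1 : (1 + β * (1 - t)) * a ^ (-β) ≤ t ^ (-β) * a ^ (-β) :=
    mul_le_mul_of_nonneg_right hkey haβ.le
  have h2 : β * (1 - t) = β * a⁻¹ * (a - b) := by
    rw [ht_def]; field_simp
  nlinarith [h1]

/-- sublinear rate: if `(e_k)` is nonnegative, nonincreasing, tends to `0`,
and satisfies `e_{k−1} − e_k ≥ K·e_k^{2θ}` for all large `k`, with `K > 0` and
`θ ∈ (1/2, 1)`, then `e_k ≤ c·k^{−1/(2θ−1)}` for some `c > 0` and all large `k`. -/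
theorem stmt18 (e : ℕ → ℝ) (K θ : ℝ) (hK : 0 < K) (hθ : θ ∈ Set.Ioo (1 / 2 : ℝ) 1)
    (he_nonneg : ∀ k, 0 ≤ e k) (he_mono : Antitone e)
    (he_lim : Filter.Tendsto e Filter.atTop (nhds 0))
    (N : ℕ) (hineq : ∀ k ≥ N, e k - e (k + 1) ≥ K * e (k + 1) ^ (2 * θ)) :
    ∃ c > 0, ∃ N' : ℕ, ∀ k ≥ N', e k ≤ c * (k : ℝ) ^ (-(1 / (2 * θ - 1))) := by
  obtain ⟨hθ1, hθ2⟩ := hθ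
  set β : ℝ := 2 * θ - 1 with hβ_def
  have hβ0 : 0 < β := by simp only [hβ_def]; linarith
  have hβ1 : β < 1 := by simp only [hβ_def]; linarith
  have hexp : (2 : ℝ) * θ = β + 1 := by simp only [hβ_def]; ring
  by_cases hpos : ∀ k, 0 < e k
  · -- all terms positive
    have heN : 0 < e N := hpos N
    set μ₁ : ℝ := K * β * 2 ^ (-(β + 1)) with hμ₁_def
    set μ₂ : ℝ := (2 ^ β - 1) * e N ^ (-β) with hμ₂_def
    have h2β : (1 : ℝ) ≤ 2 ^ β := by
      calc (1:ℝ) = 2 ^ (0:ℝ) := by simp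
        _ ≤ 2 ^ β := Real.rpow_le_rpow_of_exponent_le one_le_two hβ0.le
    have hμ₁ : 0 < μ₁ := by
      have := Real.rpow_pos_of_pos (two_pos (α := ℝ)) (-(β + 1))
      positivity
    set μ : ℝ := min μ₁ μ₂ with hμ_def
    -- Step inequality
    have hstep : ∀ k ≥ N, μ ≤ e (k + 1) ^ (-β) - e k ^ (-β) := by
      intro k hk
      set a := e k with ha_def
      set b := e (k + 1) with hb_def
      have ha : 0 < a := hpos k
      have hb : 0 < b := hpos (k + 1)
      have hba : b ≤ a := he_mono (Nat.le_succ k)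
      have hKb : K * b ^ (β + 1) ≤ a - b := by
        have := hineq k hk; rw [hexp] at this; linarith
      by_cases hcase : a ≤ 2 * b
      · -- slow decrease
        refine le_trans (min_le_left _ _) ?_
        have htan := stmt18_tangent hb hba hβ0 hβ1
        have haβ : 0 < a ^ (-(β + 1)) := Real.rpow_pos_of_pos ha _
        have h1 : β * a ^ (-(β + 1)) * (K * b ^ (β + 1)) ≤ β * a ^ (-(β + 1)) * (a - b) := by
          apply mul_le_mul_of_nonneg_left hKb; positivity
        have h2 : K * β * (b / a) ^ (β + 1) = β * a ^ (-(β + 1)) * (K * b ^ (β + 1)) := by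
          rw [Real.div_rpow hb.le ha.le, Real.rpow_neg ha.le]
          field_simp
        have h3 : (2:ℝ) ^ (-(β + 1)) ≤ (b / a) ^ (β + 1) := by
          have hhalf : (1/2 : ℝ) ≤ b / a := by
            rw [le_div_iff₀ ha]; linarith
          calc (2:ℝ) ^ (-(β + 1)) = (1/2 : ℝ) ^ (β + 1) := by
                rw [Real.rpow_neg (by norm_num), one_div, Real.inv_rpow (by norm_num)]
            _ ≤ (b / a) ^ (β + 1) := Real.rpow_le_rpow (by norm_num) hhalf (by positivity)
        calc μ₁ = K * β * 2 ^ (-(β + 1)) := rfl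
          _ ≤ K * β * (b / a) ^ (β + 1) := by
              apply mul_le_mul_of_nonneg_left h3; positivity
          _ = β * a ^ (-(β + 1)) * (K * b ^ (β + 1)) := h2
          _ ≤ β * a ^ (-(β + 1)) * (a - b) := h1
          _ ≤ b ^ (-β) - a ^ (-β) := htan
      · -- fast decrease: a > 2b
        refine le_trans (min_le_right _ _) ?_
        push_neg at hcase
        have hb2 : b < a / 2 := by linarith
        have h1 : (a / 2) ^ (-β) ≤ b ^ (-β) :=
          Real.rpow_le_rpow_of_nonpos hb (by linarith) (by linarith)
        have h2 : (a / 2) ^ (-β) = 2 ^ β * a ^ (-β) := by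
          rw [Real.div_rpow ha.le (by norm_num), Real.rpow_neg ha.le,
            Real.rpow_neg (by norm_num : (0:ℝ) ≤ 2), div_eq_mul_inv, inv_inv, mul_comm]
        have h3 : e N ^ (-β) ≤ a ^ (-β) :=
          Real.rpow_le_rpow_of_nonpos ha (he_mono hk) (by linarith)
        have haβ : 0 ≤ a ^ (-β) := (Real.rpow_pos_of_pos ha _).le
        calc μ₂ = (2 ^ β - 1) * e N ^ (-β) := rfl
          _ ≤ (2 ^ β - 1) * a ^ (-β) := by
              apply mul_le_mul_of_nonneg_left h3; linarith
          _ = 2 ^ β * a ^ (-β) - a ^ (-β) := by ring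
          _ ≤ b ^ (-β) - a ^ (-β) := by rw [← h2]; linarith
    have hμ : 0 < μ := lt_min hμ₁ (by
      have := Real.rpow_pos_of_pos heN (-β)
      have h2β' : 1 < (2:ℝ) ^ β := by
        calc (1:ℝ) = 2 ^ (0:ℝ) := by simp
          _ < 2 ^ β := Real.rpow_lt_rpow_of_exponent_lt one_lt_two hβ0
      exact mul_pos (by linarith) this)
    -- induction: e k ^ (-β) ≥ μ * (k - N) for k ≥ N
    have hgrow : ∀ k ≥ N, μ * ((k : ℝ) - N) ≤ e k ^ (-β) := by
      intro k hk
      induction k, hk using Nat.le_induction with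
      | base => simp [(Real.rpow_pos_of_pos (hpos N) (-β)).le]
      | succ n hn ih =>
        have := hstep n hn
        push_cast
        have : μ * ((n : ℝ) - N) + μ ≤ e (n + 1) ^ (-β) := by linarith
        linarith
    refine ⟨(μ / 2) ^ (-(1 / β)), Real.rpow_pos_of_pos (by linarith) _, 2 * N + 1, ?_⟩
    intro k hk
    have hk1 : (1 : ℕ) ≤ k := le_trans (Nat.le_add_left 1 (2 * N)) hk
    have hkpos : (0 : ℝ) < k := by exact_mod_cast hk1
    have hkN : N ≤ k := by omega
    have hhalf : μ / 2 * k ≤ μ * ((k : ℝ) - N) := by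
      have : (2 * N : ℝ) ≤ k := by exact_mod_cast le_trans (Nat.le_add_right _ 1) hk
      nlinarith
    have hy : 0 < μ / 2 * k := by positivity
    have hge : μ / 2 * k ≤ e k ^ (-β) := le_trans hhalf (hgrow k hkN)
    -- invert the power
    have hx : 0 < e k := hpos k
    have hinv : e k ≤ (μ / 2 * k) ^ (-(1 / β)) := by
      have h1 : (e k ^ (-β)) ^ (-(1 / β)) ≤ (μ / 2 * k) ^ (-(1 / β)) :=
        Real.rpow_le_rpow_of_nonpos hy hge (neg_nonpos.mpr (by positivity))
      have h2 : (e k ^ (-β)) ^ (-(1 / β)) = e k := by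
        rw [← Real.rpow_mul hx.le]
        rw [show -β * -(1 / β) = 1 by field_simp]
        exact Real.rpow_one _
      linarith [h1, h2.symm.le]
    calc e k ≤ (μ / 2 * k) ^ (-(1 / β)) := hinv
      _ = (μ / 2) ^ (-(1 / β)) * (k : ℝ) ^ (-(1 / (2 * θ - 1))) := by
          rw [Real.mul_rpow (by linarith) hkpos.le, hβ_def]
  · -- some term is zero; then e is eventually 0
    push_neg at hpos
    obtain ⟨m, hm⟩ := hpos
    have hm0 : e m = 0 := le_antisymm hm (he_nonneg m)
    refine ⟨1, one_pos, m + 1, ?_⟩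
    intro k hk
    have hek : e k = 0 := le_antisymm (hm0 ▸ he_mono (by omega)) (he_nonneg k)
    have hkpos : (0 : ℝ) < k := by
      have : (1:ℕ) ≤ k := by omega
      exact_mod_cast this
    rw [hek, one_mul]
    exact (Real.rpow_pos_of_pos hkpos _).le
end
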